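/- Let S and M = LᵀL be p × p positive semidefinite matrices, and let μ exceed λ_max(S)·λ_max(M), the product of their largest eigenvalues. Then the function f(P) = (1/2)·tr(L P S Pᵀ Lᵀ) − (μ/2)·‖P‖_F² is concave on matrix space, and consequently its minimum over the Birkhoff polytope of doubly stochastic matrices is attained at an extreme point, i.e., at a permutation matrix. -/

import Mathlib

/-!
The objective is `P ↦ B(P, P) / 2` for the bilinear form `B(P, Q) = tr(L P S Qᵀ Lᵀ) - μ tr(P Qᵀ)`.
Conjugating `S ≤ λ_max(S) • 1` by `L P` and then `LᵀL ≤ λ_max(LᵀL) • 1` by `Pᵀ` gives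
`tr(L P S Pᵀ Lᵀ) ≤ λ_max(S) λ_max(LᵀL) ‖P‖_F²`, so `B(P, P) ≤ 0` when `μ` exceeds that product.
A quadratic form that is nowhere positive is concave, because
`Q(a x + b y) - a Q(x) - b Q(y) = -a b Q(x - y)` when `a + b = 1`. By the minimum principle a
concave function on the Birkhoff polytope, the convex hull of the permutation matrices, is
minimised at one of them.
-/

open Matrix BigOperators

def IsDoublyStochastic {p : ℕ} (P : Matrix (Fin p) (Fin p) ℝ) : Prop :=
  (∀ i j, 0 ≤ P i j) ∧ (∀ i, ∑ j, P i j = 1) ∧ (∀ j, ∑ i, P i j = 1)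

def IsPermMatrix {p : ℕ} (P : Matrix (Fin p) (Fin p) ℝ) : Prop :=
  ∃ σ : Equiv.Perm (Fin p), P = σ.permMatrix ℝ

open Set

theorem QuadraticMap.concaveOn_univ_of_nonpos {𝕜 E : Type*} [Field 𝕜] [LinearOrder 𝕜]
    [IsStrictOrderedRing 𝕜] [AddCommGroup E] [Module 𝕜 E] (Q : QuadraticMap 𝕜 E 𝕜)
    (hQ : ∀ x, Q x ≤ 0) : ConcaveOn 𝕜 univ Q := by
  refine ⟨convex_univ, fun x _ y _ a b ha hb hab => ?_⟩
  have hcomb : Q (a • x + b • y) = a * a * Q x + b * b * Q y + a * b * polar Q x y := by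
    rw [QuadraticMap.map_add Q, Q.map_smul, Q.map_smul, polar_smul_left, polar_smul_right,
      smul_eq_mul, smul_eq_mul, smul_eq_mul, smul_eq_mul, mul_assoc a b]
  have hdiff : Q (x - y) = Q x + Q y - polar Q x y := by
    rw [sub_eq_add_neg, QuadraticMap.map_add Q, Q.map_neg, polar_neg_right, sub_eq_add_neg]
  have hsplit : Q (a • x + b • y) - (a • Q x + b • Q y) = -(a * b * Q (x - y)) := by
    rw [smul_eq_mul, smul_eq_mul]
    linear_combination hcomb + a * b * hdiff + (a * Q x + b * Q y) * hab
  linarith [mul_nonneg (mul_nonneg ha hb) (neg_nonneg.mpr (hQ (x - y)))]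

theorem ConcaveOn.exists_isMinOn_convexHull {𝕜 E β : Type*} [Field 𝕜] [LinearOrder 𝕜]
    [IsStrictOrderedRing 𝕜] [AddCommGroup E] [AddCommGroup β] [LinearOrder β]
    [IsOrderedAddMonoid β] [Module 𝕜 E] [Module 𝕜 β] [IsStrictOrderedModule 𝕜 β] {s : Set E}
    {f : E → β} (hf : ConcaveOn 𝕜 (convexHull 𝕜 s) f) (hs : s.Finite) (hne : s.Nonempty) :
    ∃ x ∈ s, IsMinOn f (convexHull 𝕜 s) x := by
  obtain ⟨x, hx, hmin⟩ := s.exists_min_image f hs hne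
  refine ⟨x, hx, isMinOn_iff.mpr fun y hy => ?_⟩
  obtain ⟨z, hz, hzy⟩ := hf.exists_le_of_mem_convexHull (subset_convexHull 𝕜 s) hy
  exact (hmin z hz).trans hzy

namespace Matrix

variable {m n : Type*} [Fintype m] [Fintype n]

section Eigenvalues

variable [DecidableEq n]

theorem IsHermitian.posSemidef_smul_one_sub {A : Matrix n n ℝ} (hA : A.IsHermitian) {c : ℝ}
    (hc : ∀ i, hA.eigenvalues i ≤ c) : (c • 1 - A).PosSemidef := by
  open scoped MatrixOrder in
  have hle : A ≤ algebraMap ℝ (Matrix n n ℝ) c := le_algebraMap_of_spectrum_le <| by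
    rw [hA.spectrum_real_eq_range_eigenvalues]
    rintro _ ⟨i, rfl⟩
    exact hc i
  rwa [Matrix.le_iff, Algebra.algebraMap_eq_smul_one] at hle

theorem IsHermitian.trace_mul_mul_transpose_le {A : Matrix n n ℝ} (hA : A.IsHermitian) {c : ℝ}
    (hc : ∀ i, hA.eigenvalues i ≤ c) (B : Matrix m n ℝ) :
    (B * A * Bᵀ).trace ≤ c * (B * Bᵀ).trace := by
  have h := ((hA.posSemidef_smul_one_sub hc).mul_mul_conjTranspose_same B).trace_nonneg
  rw [conjTranspose_eq_transpose_of_trivial, Matrix.mul_sub, Matrix.sub_mul, trace_sub,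
    Matrix.mul_smul, Matrix.mul_one, Matrix.smul_mul, trace_smul, smul_eq_mul] at h
  linarith

theorem IsHermitian.eigenvalues_le_iSup {A : Matrix n n ℝ} (hA : A.IsHermitian) (i : n) :
    hA.eigenvalues i ≤ ⨆ j, hA.eigenvalues j :=
  le_ciSup (finite_range _).bddAbove i

theorem trace_mul_mul_transpose_mul_transpose_le {S L : Matrix n n ℝ} (hS : S.IsHermitian)
    (hM : (Lᵀ * L).IsHermitian) {s t : ℝ} (hs : ∀ i, hS.eigenvalues i ≤ s)
    (ht : ∀ i, hM.eigenvalues i ≤ t) (hs₀ : 0 ≤ s) (P : Matrix n n ℝ) :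
    (L * P * S * Pᵀ * Lᵀ).trace ≤ s * t * (P * Pᵀ).trace :=
  calc (L * P * S * Pᵀ * Lᵀ).trace = (L * P * S * (L * P)ᵀ).trace := by
        simp only [transpose_mul, Matrix.mul_assoc]
    _ ≤ s * (L * P * (L * P)ᵀ).trace := hS.trace_mul_mul_transpose_le hs _
    _ = s * (Pᵀ * (Lᵀ * L) * Pᵀᵀ).trace := by
        rw [transpose_transpose, trace_mul_comm, transpose_mul]
        simp only [Matrix.mul_assoc]
    _ ≤ s * (t * (Pᵀ * Pᵀᵀ).trace) := by gcongr; exact hM.trace_mul_mul_transpose_le ht _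
    _ = s * t * (P * Pᵀ).trace := by rw [transpose_transpose, trace_mul_comm, mul_assoc]

end Eigenvalues

theorem sum_sum_sq_eq_trace_mul_transpose (P : Matrix m n ℝ) :
    ∑ i, ∑ j, P i j ^ 2 = (P * Pᵀ).trace := by
  simp only [trace, diag, mul_apply, transpose_apply, sq]

noncomputable def penalizedTraceForm (S L : Matrix n n ℝ) (μ : ℝ) :
    QuadraticMap ℝ (Matrix n n ℝ) ℝ :=
  LinearMap.BilinMap.toQuadraticMap <| LinearMap.mk₂ ℝ
    (fun P Q => (L * P * S * Qᵀ * Lᵀ).trace - μ * (P * Qᵀ).trace)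
    (fun P P' Q => by simp only [Matrix.mul_add, Matrix.add_mul, trace_add]; ring)
    (fun a P Q => by simp only [Matrix.mul_smul, Matrix.smul_mul, trace_smul, smul_eq_mul]; ring)
    (fun P Q Q' => by simp only [transpose_add, Matrix.mul_add, Matrix.add_mul, trace_add]; ring)
    (fun a P Q => by
      simp only [transpose_smul, Matrix.mul_smul, Matrix.smul_mul, trace_smul, smul_eq_mul]; ring)

theorem penalizedTraceForm_apply (S L : Matrix n n ℝ) (μ : ℝ) (P : Matrix n n ℝ) :
    penalizedTraceForm S L μ P = (L * P * S * Pᵀ * Lᵀ).trace - μ * (P * Pᵀ).trace :=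
  rfl

theorem penalizedTraceForm_nonpos [DecidableEq n] {S L : Matrix n n ℝ} (hS : S.PosSemidef)
    (hM : (Lᵀ * L).PosSemidef)
    {μ : ℝ} (hμ : (⨆ i, hS.1.eigenvalues i) * (⨆ i, hM.1.eigenvalues i) < μ)
    (P : Matrix n n ℝ) : penalizedTraceForm S L μ P ≤ 0 := by
  have hbound := trace_mul_mul_transpose_mul_transpose_le hS.1 hM.1 hS.1.eigenvalues_le_iSup
    hM.1.eigenvalues_le_iSup (Real.iSup_nonneg hS.eigenvalues_nonneg) P
  have hfro : 0 ≤ (P * Pᵀ).trace := by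
    simpa using (posSemidef_self_mul_conjTranspose P).trace_nonneg
  rw [penalizedTraceForm_apply]
  nlinarith [mul_le_mul_of_nonneg_right hμ.le hfro]

end Matrix

theorem concavity_and_permutation_minimizer_general {p : ℕ}
    (S L : Matrix (Fin p) (Fin p) ℝ) (hS : S.PosSemidef)
    (hM : (Lᵀ * L).PosSemidef) (μ : ℝ)
    (hμ : (⨆ i, hS.1.eigenvalues i) * (⨆ i, hM.1.eigenvalues i) < μ) :
    ConcaveOn ℝ Set.univ
      (fun P : Matrix (Fin p) (Fin p) ℝ =>
        (1 / 2) * (L * P * S * Pᵀ * Lᵀ).trace -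
          (μ / 2) * ∑ i, ∑ j, (P i j) ^ 2) ∧
    ∃ P : Matrix (Fin p) (Fin p) ℝ, IsPermMatrix P ∧
      ∀ Q : Matrix (Fin p) (Fin p) ℝ, IsDoublyStochastic Q →
        (1 / 2) * (L * P * S * Pᵀ * Lᵀ).trace -
            (μ / 2) * ∑ i, ∑ j, (P i j) ^ 2 ≤
          (1 / 2) * (L * Q * S * Qᵀ * Lᵀ).trace -
            (μ / 2) * ∑ i, ∑ j, (Q i j) ^ 2 := by
  have hf : (fun P : Matrix (Fin p) (Fin p) ℝ =>
      (1 / 2) * (L * P * S * Pᵀ * Lᵀ).trace - (μ / 2) * ∑ i, ∑ j, (P i j) ^ 2) =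
      fun P => (1 / 2 : ℝ) • penalizedTraceForm S L μ P := by
    funext P
    rw [penalizedTraceForm_apply, sum_sum_sq_eq_trace_mul_transpose, smul_eq_mul]
    ring
  have hconc : ConcaveOn ℝ univ (fun P : Matrix (Fin p) (Fin p) ℝ =>
      (1 / 2) * (L * P * S * Pᵀ * Lᵀ).trace - (μ / 2) * ∑ i, ∑ j, (P i j) ^ 2) :=
    hf ▸ ((penalizedTraceForm S L μ).concaveOn_univ_of_nonpos
      (penalizedTraceForm_nonpos hS hM hμ)).smul (by norm_num)
  obtain ⟨_, ⟨σ, rfl⟩, hmin⟩ := (hconc.subset (subset_univ _) (convex_convexHull ℝ _))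
    |>.exists_isMinOn_convexHull (finite_range fun σ : Equiv.Perm (Fin p) => σ.permMatrix ℝ)
      (range_nonempty _)
  refine ⟨hconc, _, ⟨σ, rfl⟩, fun Q hQ => hmin ?_⟩
  have hQ' : Q ∈ (doublyStochastic ℝ (Fin p) : Set _) := mem_doublyStochastic_iff_sum.mpr hQ
  rwa [doublyStochastic_eq_convexHull_permMatrix] at hQ'

/-- If `μ > λ_max(S)·λ_max(LᵀL)` then `P ↦ (1/2)·tr(L P S Pᵀ Lᵀ) − (μ/2)·‖P‖_F²`
is concave on matrix space and its minimum over the Birkhoff polytope is attained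
at a permutation matrix. -/
theorem concavity_and_permutation_minimizer {p : ℕ} (hp : 0 < p)
    (S L : Matrix (Fin p) (Fin p) ℝ) (hS : S.PosSemidef)
    (hM : (Lᵀ * L).PosSemidef) (μ : ℝ)
    (hμ : (⨆ i, hS.1.eigenvalues i) * (⨆ i, hM.1.eigenvalues i) < μ) :
    ConcaveOn ℝ Set.univ
      (fun P : Matrix (Fin p) (Fin p) ℝ =>
        (1 / 2) * (L * P * S * Pᵀ * Lᵀ).trace -
          (μ / 2) * ∑ i, ∑ j, (P i j) ^ 2) ∧
    ∃ P : Matrix (Fin p) (Fin p) ℝ, IsPermMatrix P ∧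
      ∀ Q : Matrix (Fin p) (Fin p) ℝ, IsDoublyStochastic Q →
        (1 / 2) * (L * P * S * Pᵀ * Lᵀ).trace -
            (μ / 2) * ∑ i, ∑ j, (P i j) ^ 2 ≤
          (1 / 2) * (L * Q * S * Qᵀ * Lᵀ).trace -
            (μ / 2) * ∑ i, ∑ j, (Q i j) ^ 2 :=
  concavity_and_permutation_minimizer_general S L hS hM μ hμ
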